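/- Let a, b > 1 and c ≥ 0 with log a ≥ 1 (i.e. a ≥ e) and li(b) = li(a) + c. Then log b ≤ log a + c · (log a) / a. -/

import Mathlib

/-! On `[a, b]` with `e ≤ a` the function `log τ / τ` is decreasing, so
`1 / τ = (log τ / τ) · (1 / log τ) ≤ (log a / a) · (1 / log τ)`. Integrating from `a` to `b` gives
`log b - log a ≤ (log a / a) · (li b - li a)`, and `a ≤ b` because `li` is increasing on `(1, ∞)`. -/

/-- The logarithmic integral `li t = ∫_2^t dτ / log τ`. -/
noncomputable def li (t : ℝ) : ℝ := ∫ τ in (2:ℝ)..t, 1 / Real.log τ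

open Real Set intervalIntegral

lemma intervalIntegrable_one_div_log {x y : ℝ} (hx : 1 < x) (hy : 1 < y) :
    IntervalIntegrable (fun τ => 1 / log τ) MeasureTheory.volume x y := by
  have huIcc : uIcc x y ⊆ Ioi 1 := fun τ hτ => lt_of_lt_of_le (lt_min hx hy) hτ.1
  refine intervalIntegrable_one_div (fun τ hτ => (log_pos (huIcc hτ)).ne') ?_
  exact continuousOn_log.mono fun τ hτ => (zero_lt_one.trans (huIcc hτ)).ne'

lemma li_sub_li {x y : ℝ} (hx : 1 < x) (hy : 1 < y) :
    li y - li x = ∫ τ in x..y, 1 / log τ :=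
  integral_interval_sub_left
    (intervalIntegrable_one_div_log one_lt_two hy) (intervalIntegrable_one_div_log one_lt_two hx)

lemma li_strictMonoOn : StrictMonoOn li (Ioi 1) := by
  intro x hx y hy hxy
  have hpos : 0 < ∫ τ in x..y, 1 / log τ :=
    intervalIntegral_pos_of_pos_on (intervalIntegrable_one_div_log hx hy)
      (fun τ hτ => one_div_pos.mpr (log_pos (lt_trans hx hτ.1))) hxy
  linarith [li_sub_li hx hy]

lemma one_div_le_log_div_self_mul_one_div_log {a τ : ℝ} (hea : exp 1 ≤ a) (haτ : a ≤ τ) :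
    1 / τ ≤ log a / a * (1 / log τ) := by
  have hτ : 0 < τ := (exp_pos 1).trans_le (hea.trans haτ)
  have hlogτ : 0 < log τ := log_pos ((one_lt_exp_iff.mpr one_pos).trans_le (hea.trans haτ))
  have hdecr : log τ / τ ≤ log a / a :=
    log_div_self_antitoneOn (by simpa using hea) (by simpa using hea.trans haτ) haτ
  calc 1 / τ = log τ / τ * (1 / log τ) := by field_simp
    _ ≤ log a / a * (1 / log τ) := by gcongr

lemma log_sub_log_le_mul_li_sub_li {a b : ℝ} (hea : exp 1 ≤ a) (hab : a ≤ b) :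
    log b - log a ≤ log a / a * (li b - li a) := by
  have ha : 1 < a := (one_lt_exp_iff.mpr one_pos).trans_le hea
  have hb : 1 < b := ha.trans_le hab
  have ha0 : 0 < a := zero_lt_one.trans ha
  calc log b - log a = ∫ τ in a..b, 1 / τ := by
        rw [integral_one_div_of_pos ha0 (ha0.trans_le hab), log_div (by linarith) ha0.ne']
    _ ≤ ∫ τ in a..b, log a / a * (1 / log τ) :=
        integral_mono_on hab
          (intervalIntegrable_one_div
            (fun τ hτ => (ha0.trans_le (uIcc_of_le hab ▸ hτ).1).ne') continuousOn_id)
          ((intervalIntegrable_one_div_log ha hb).const_mul _)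
          fun τ hτ => one_div_le_log_div_self_mul_one_div_log hea hτ.1
    _ = log a / a * (li b - li a) := by
        rw [integral_const_mul, li_sub_li ha hb]

/-- Concavity estimate for `log ∘ li⁻¹`: if `li b = li a + c` with `log a ≥ 1`,
then `log b ≤ log a + c · (log a) / a`. -/
theorem log_inverse_li_concavity_upper_bound
    (a b c : ℝ) (ha : 1 < a) (hb : 1 < b) (hc : 0 ≤ c)
    (hloga : 1 ≤ Real.log a)
    (hli : li b = li a + c) :
    Real.log b ≤ Real.log a + c * Real.log a / a := by
  have hea : exp 1 ≤ a := by rwa [← log_le_log_iff (exp_pos 1) (by linarith), log_exp]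
  have hab : a ≤ b := (li_strictMonoOn.le_iff_le ha hb).mp (by linarith)
  have := log_sub_log_le_mul_li_sub_li hea hab
  rw [hli] at this
  linarith [show log a / a * (li a + c - li a) = c * log a / a by ring]
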